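/- Let Ω ⊆ ℝⁿ be a bounded open set, T > 0, and let u : (0,T)×Ω → ℝⁿ and p : (0,T)×Ω → ℝ be locally integrable with u(t,·) ∈ L²(Ω;ℝⁿ) for a.e. t. Suppose that for every χ ∈ C_c^∞((0,T)) and every ψ ∈ C_c^1(Ω) (continuously differentiable with compact support in Ω) the local energy balance holds: ∫₀ᵀ χ′(t) ∫_Ω (|u(t,x)|²/2) ψ(x) dx dt + ∫₀ᵀ χ(t) ∫_Ω (|u(t,x)|²/2 + p(t,x)) u(t,x)·∇ψ(x) dx dt = 0, all integrands being integrable. Let d(x) := dist(x, ℝⁿ∖Ω), assume d is C¹ with |∇d| = 1 on {x ∈ Ω : d(x) < η₀} for some η₀ > 0, and assume the flux condition: lim_{η→0⁺} (1/η) ∫₀ᵀ ∫_{{x∈Ω : η/4 < d(x) < η/2}} | (|u|²/2 + p)(t,x) · u(t,x)·∇d(x) | dx dt = 0. Finally, assume t ↦ ‖u(t,·)‖_{L²(Ω)} belongs to L^q(0,T) for some q ∈ [1,∞]. Then for a.e. t₁, t₂ ∈ (0,T), ∫_Ω |u(t₂,x)|² dx = ∫_Ω |u(t₁,x)|² dx.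 -/

import Mathlib

/-!
Test the local balance with `χ(t) ψ_η(x)`, `ψ_η = φ(d/η)`. Since `∇ψ_η = φ'(d/η) ∇d / η` lives in
the strip `η/4 < d < η/2`, the flux term is at most `sup |φ'|` times the quantity `Φ(η)` of the
flux condition, so the truncated energy `E_η(t) = ∫_Ω |u|²/2 ψ_η` has a distributional time
derivative of total mass `≤ sup |φ'| Φ(η)`. Comparing mollifications of `E_η` at two Lebesgue
points turns this into `|E_η(t₁) - E_η(t₂)| ≤ sup |φ'| Φ(η)` for a.e. `t₁, t₂`. As `η → 0`,
`E_η(t) → E(t)` by dominated convergence while `Φ(η) → 0`, hence `E(t₁) = E(t₂)`.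
-/

open MeasureTheory Metric Set Function Filter
open scoped ENNReal Topology

noncomputable section

/-- `ℝⁿ` with the Euclidean norm. -/
abbrev Eu (n : ℕ) : Type := EuclideanSpace ℝ (Fin n)

/-- The partial derivative `∂f/∂xᵢ` of a scalar function on `ℝⁿ`. -/
def pd {n : ℕ} (i : Fin n) (f : Eu n → ℝ) (x : Eu n) : ℝ :=
  fderiv ℝ f x (EuclideanSpace.single i 1)

open scoped Convolution

/-- The distributional derivative of `g` on `s` is a measure of total mass at most `C`
(the dual description of the essential variation). -/
def HasDistribVariationLE (g : ℝ → ℝ) (s : Set ℝ) (C : ℝ≥0∞) : Prop :=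
  ∀ χ : ℝ → ℝ, ContDiff ℝ (⊤ : ℕ∞) χ → HasCompactSupport χ → tsupport χ ⊆ s →
    (∀ t, |χ t| ≤ 1) → ‖∫ t, deriv χ t * g t‖ₑ ≤ C

lemma intervalIntegral_eq_zero_of_support_subset {f : ℝ → ℝ} {c d t : ℝ}
    (hf : support f ⊆ Ioo c d) (hint : ∫ s, f s = 0) (ht : t ∉ Ioo c d) :
    ∫ s in c..t, f s = 0 := by
  have hf' : ∀ s ∉ Ioo c d, f s = 0 := fun s hs => notMem_support.1 (mt (@hf s) hs)
  rcases le_or_gt t c with htc | hct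
  · refine intervalIntegral.integral_zero_ae (.of_forall fun s hs => hf' s fun h => ?_)
    exact (uIoc_of_ge htc ▸ hs).2.not_gt h.1
  · have hdt : d ≤ t := not_lt.1 fun h => ht ⟨hct, h⟩
    rw [intervalIntegral.integral_of_le hct.le, ← hint]
    exact setIntegral_eq_integral_of_forall_compl_eq_zero fun s hs =>
      hf' s fun h => hs ⟨h.1, h.2.le.trans hdt⟩

lemma exists_primitive_sub_of_integral_eq_one {ρ₁ ρ₂ : ℝ → ℝ} {c d : ℝ}
    (h₁ : ContDiff ℝ (⊤ : ℕ∞) ρ₁) (h₂ : ContDiff ℝ (⊤ : ℕ∞) ρ₂)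
    (hn₁ : ∀ s, 0 ≤ ρ₁ s) (hn₂ : ∀ s, 0 ≤ ρ₂ s)
    (hi₁ : ∫ s, ρ₁ s = 1) (hi₂ : ∫ s, ρ₂ s = 1)
    (hs₁ : support ρ₁ ⊆ Ioo c d) (hs₂ : support ρ₂ ⊆ Ioo c d) :
    ∃ χ : ℝ → ℝ, ContDiff ℝ (⊤ : ℕ∞) χ ∧ support χ ⊆ Ioo c d ∧ (∀ t, |χ t| ≤ 1) ∧
      deriv χ = ρ₁ - ρ₂ := by
  have hint₁ : Integrable ρ₁ := .of_integral_ne_zero (by simp [hi₁])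
  have hint₂ : Integrable ρ₂ := .of_integral_ne_zero (by simp [hi₂])
  have hcont : Continuous (ρ₁ - ρ₂) := h₁.continuous.sub h₂.continuous
  have hderiv : deriv (fun t => ∫ s in c..t, (ρ₁ - ρ₂) s) = ρ₁ - ρ₂ :=
    funext (hcont.deriv_integral _ c)
  have hzero : ∀ t ∉ Ioo c d, ∫ s in c..t, (ρ₁ - ρ₂) s = 0 := fun t =>
    intervalIntegral_eq_zero_of_support_subset
      ((support_sub ρ₁ ρ₂).trans (union_subset hs₁ hs₂))
      (by simp only [Pi.sub_apply]; rw [integral_sub hint₁ hint₂, hi₁, hi₂, sub_self])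
  have hmass : ∀ ρ : ℝ → ℝ, (∀ s, 0 ≤ ρ s) → Integrable ρ → ∫ s, ρ s = 1 → ∀ t, c ≤ t →
      0 ≤ ∫ s in c..t, ρ s ∧ ∫ s in c..t, ρ s ≤ 1 := by
    intro ρ hn hi h1 t hct
    rw [intervalIntegral.integral_of_le hct]
    exact ⟨setIntegral_nonneg measurableSet_Ioc fun s _ => hn s,
      h1 ▸ setIntegral_le_integral hi (.of_forall hn)⟩
  refine ⟨fun t => ∫ s in c..t, (ρ₁ - ρ₂) s, ?_, fun t ht => ?_, fun t => ?_, hderiv⟩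
  · rw [contDiff_infty_iff_deriv, hderiv]
    exact ⟨fun t => (hcont.integral_hasStrictDerivAt c t).hasDerivAt.differentiableAt,
      h₁.sub h₂⟩
  · exact not_not.1 fun h => ht (hzero t h)
  · by_cases ht : t ∈ Ioo c d
    · obtain ⟨a₁, b₁⟩ := hmass ρ₁ hn₁ hint₁ hi₁ t ht.1.le
      obtain ⟨a₂, b₂⟩ := hmass ρ₂ hn₂ hint₂ hi₂ t ht.1.le
      simp only [Pi.sub_apply]
      rw [intervalIntegral.integral_sub hint₁.intervalIntegrable hint₂.intervalIntegrable]
      exact abs_sub_le_iff.2 ⟨by linarith, by linarith⟩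
    · simp only [hzero t ht, abs_zero, zero_le_one]

namespace ContDiffBump

variable (φ : ContDiffBump (0 : ℝ))

lemma support_normed_sub (t : ℝ) :
    support (fun s => φ.normed volume (s - t)) = ball t φ.rOut := by
  ext s
  simp [← mem_support (f := φ.normed volume), φ.support_normed_eq, Real.dist_eq]

lemma convolution_eq_integral_normed_sub (g : ℝ → ℝ) (t : ℝ) :
    (φ.normed volume ⋆[ContinuousLinearMap.lsmul ℝ ℝ] g) t =
      ∫ s, φ.normed volume (s - t) * g s := by
  simp only [convolution_eq_swap, ContinuousLinearMap.lsmul_apply, smul_eq_mul,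
    ← φ.normed_neg (t - _), neg_sub]

/-- The difference of the mollified values at `t₁` and `t₂` is `∫ χ' g`, where `χ` is the
primitive of the difference of the two translated mollifiers. -/
lemma enorm_convolution_sub_le {g : ℝ → ℝ} (hg : LocallyIntegrable g) {s : Set ℝ} {C : ℝ≥0∞}
    (hC : HasDistribVariationLE g s C) {t₁ t₂ : ℝ}
    (hs : Icc (min t₁ t₂ - φ.rOut) (max t₁ t₂ + φ.rOut) ⊆ s) :
    ‖(φ.normed volume ⋆[ContinuousLinearMap.lsmul ℝ ℝ] g) t₁ -
      (φ.normed volume ⋆[ContinuousLinearMap.lsmul ℝ ℝ] g) t₂‖ₑ ≤ C := by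
  set ρ := φ.normed volume
  have hsupp : ∀ t ∈ ({t₁, t₂} : Set ℝ), support (fun s => ρ (s - t)) ⊆
      Ioo (min t₁ t₂ - φ.rOut) (max t₁ t₂ + φ.rOut) := by
    intro t ht
    rw [support_normed_sub, Real.ball_eq_Ioo]
    have : min t₁ t₂ ≤ t ∧ t ≤ max t₁ t₂ := by
      rcases ht with rfl | rfl <;> simp
    exact Ioo_subset_Ioo (by linarith) (by linarith)
  have hint : ∀ t, Integrable (fun s => ρ (s - t) * g s) :=
    fun t => hg.integrable_smul_left_of_hasCompactSupport
      (φ.continuous_normed.comp (continuous_sub_right t))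
      (φ.hasCompactSupport_normed.comp_homeomorph (Homeomorph.subRight t))
  have hmass : ∀ t, ∫ s, ρ (s - t) = 1 := fun t => by
    rw [integral_sub_right_eq_self, φ.integral_normed]
  obtain ⟨χ, hχ, hχs, hχ1, hχ'⟩ := exists_primitive_sub_of_integral_eq_one
    (φ.contDiff_normed.comp (contDiff_id.sub contDiff_const))
    (φ.contDiff_normed.comp (contDiff_id.sub contDiff_const))
    (fun _ => φ.nonneg_normed _) (fun _ => φ.nonneg_normed _) (hmass t₁) (hmass t₂)
    (hsupp t₁ (by simp)) (hsupp t₂ (by simp))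
  have hχK : tsupport χ ⊆ Icc (min t₁ t₂ - φ.rOut) (max t₁ t₂ + φ.rOut) :=
    closure_minimal (hχs.trans Ioo_subset_Icc_self) isClosed_Icc
  calc ‖(ρ ⋆[ContinuousLinearMap.lsmul ℝ ℝ] g) t₁ - (ρ ⋆[ContinuousLinearMap.lsmul ℝ ℝ] g) t₂‖ₑ
      = ‖∫ s, deriv χ s * g s‖ₑ := by
        rw [convolution_eq_integral_normed_sub, convolution_eq_integral_normed_sub,
          ← integral_sub (hint t₁) (hint t₂), hχ']
        simp only [Pi.sub_apply, Function.comp_apply, id, sub_mul]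
        rfl
    _ ≤ C := hC χ hχ (.of_isClosed_subset isCompact_Icc (isClosed_tsupport χ) hχK)
        (hχK.trans hs) hχ1

end ContDiffBump

namespace HasDistribVariationLE

variable {g : ℝ → ℝ} {s : Set ℝ} {C : ℝ≥0∞}

lemma mono (h : HasDistribVariationLE g s C) {s' : Set ℝ} {C' : ℝ≥0∞} (hs : s' ⊆ s)
    (hC : C ≤ C') : HasDistribVariationLE g s' C' :=
  fun χ hχ hχc hχs hχ1 => (h χ hχ hχc (hχs.trans hs) hχ1).trans hC

lemma indicator (h : HasDistribVariationLE g s C) {K : Set ℝ} (hK : s ⊆ K) :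
    HasDistribVariationLE (K.indicator g) s C := by
  intro χ hχ hχc hχs hχ1
  convert h χ hχ hχc hχs hχ1 using 4 with t
  by_cases ht : t ∈ K
  · rw [indicator_of_mem ht]
  · have : deriv χ t = 0 := notMem_support.1 fun h' => ht (hK (hχs (support_deriv_subset h')))
    rw [this, zero_mul, zero_mul]

lemma ae_enorm_sub_le (hg : LocallyIntegrable g) {a b : ℝ}
    (h : HasDistribVariationLE g (Ioo a b) C) :
    ∀ᵐ t₁, ∀ᵐ t₂, t₁ ∈ Ioo a b → t₂ ∈ Ioo a b → ‖g t₁ - g t₂‖ₑ ≤ C := by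
  let φ : ℕ → ContDiffBump (0 : ℝ) := fun j =>
    ⟨1 / (j + 1) / 2, 1 / (j + 1), by positivity, half_lt_self (by positivity)⟩
  have hφ : Tendsto (fun j => (φ j).rOut) atTop (𝓝 0) := tendsto_one_div_add_atTop_nhds_zero_nat
  have hlim := ContDiffBump.ae_convolution_tendsto_right_of_locallyIntegrable (K := 2) hφ
    (Eventually.of_forall fun j => (mul_div_cancel₀ _ two_ne_zero).ge) hg
  filter_upwards [hlim] with t₁ h₁
  filter_upwards [hlim] with t₂ h₂ ht₁ ht₂
  have hε : 0 < min (min t₁ t₂ - a) (b - max t₁ t₂) := by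
    simp only [lt_min_iff, sub_pos, max_lt_iff]
    exact ⟨⟨ht₁.1, ht₂.1⟩, ht₁.2, ht₂.2⟩
  refine le_of_tendsto ((h₁.sub h₂).enorm) ?_
  filter_upwards [hφ.eventually (gt_mem_nhds hε)] with j hj
  refine (φ j).enorm_convolution_sub_le hg h (Icc_subset_Ioo ?_ ?_)
  · linarith [min_le_left (min t₁ t₂ - a) (b - max t₁ t₂)]
  · linarith [min_le_right (min t₁ t₂ - a) (b - max t₁ t₂)]

lemma ae_restrict_enorm_sub_le {a b : ℝ} (hg : LocallyIntegrableOn g (Ioo a b))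
    (h : HasDistribVariationLE g (Ioo a b) C) :
    ∀ᵐ t₁ ∂volume.restrict (Ioo a b), ∀ᵐ t₂ ∂volume.restrict (Ioo a b), ‖g t₁ - g t₂‖ₑ ≤ C := by
  have hcompact : ∀ m : ℕ, ∀ᵐ t₁, ∀ᵐ t₂, t₁ ∈ Ioo (a + 1 / (m + 1)) (b - 1 / (m + 1)) →
      t₂ ∈ Ioo (a + 1 / (m + 1)) (b - 1 / (m + 1)) → ‖g t₁ - g t₂‖ₑ ≤ C := by
    intro m
    have hm : (0 : ℝ) < 1 / (m + 1) := by positivity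
    have hK : Icc (a + 1 / (m + 1)) (b - 1 / (m + 1)) ⊆ Ioo a b :=
      Icc_subset_Ioo (by linarith) (by linarith)
    have hgK := (hg.integrableOn_compact_subset hK isCompact_Icc).integrable_indicator
      measurableSet_Icc
    filter_upwards [ae_enorm_sub_le hgK.locallyIntegrable
      ((h.mono (Ioo_subset_Icc_self.trans hK) le_rfl).indicator Ioo_subset_Icc_self)] with t₁ h₁
    filter_upwards [h₁] with t₂ h₂ ht₁ ht₂
    simpa only [indicator_of_mem (Ioo_subset_Icc_self ht₁),
      indicator_of_mem (Ioo_subset_Icc_self ht₂)] using h₂ ht₁ ht₂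
  rw [ae_restrict_iff' measurableSet_Ioo]
  filter_upwards [ae_all_iff.2 hcompact] with t₁ h₁ ht₁
  rw [ae_restrict_iff' measurableSet_Ioo]
  filter_upwards [ae_all_iff.2 h₁] with t₂ h₂ ht₂
  have hε : 0 < min (min t₁ t₂ - a) (b - max t₁ t₂) := by
    simp only [lt_min_iff, sub_pos, max_lt_iff]
    exact ⟨⟨ht₁.1, ht₂.1⟩, ht₁.2, ht₂.2⟩
  obtain ⟨m, hm⟩ := exists_nat_one_div_lt hε
  refine h₂ m ⟨?_, ?_⟩ ⟨?_, ?_⟩ <;>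
    linarith [min_le_left (min t₁ t₂ - a) (b - max t₁ t₂),
      min_le_right (min t₁ t₂ - a) (b - max t₁ t₂),
      min_le_left t₁ t₂, min_le_right t₁ t₂, le_max_left t₁ t₂, le_max_right t₁ t₂]

end HasDistribVariationLE

lemma ae_ae_eq_of_tendsto_of_enorm_sub_le {α E : Type*} [MeasurableSpace α] {μ : Measure α}
    [NormedAddCommGroup E] {g : ℕ → α → E} {G : α → E} {C : ℕ → ℝ≥0∞}
    (hg : ∀ᵐ t ∂μ, Tendsto (fun k => g k t) atTop (𝓝 (G t))) (hC : Tendsto C atTop (𝓝 0))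
    (hgC : ∀ k, ∀ᵐ t₁ ∂μ, ∀ᵐ t₂ ∂μ, ‖g k t₁ - g k t₂‖ₑ ≤ C k) :
    ∀ᵐ t₁ ∂μ, ∀ᵐ t₂ ∂μ, G t₁ = G t₂ := by
  filter_upwards [hg, ae_all_iff.2 hgC] with t₁ h₁ hC₁
  filter_upwards [hg, ae_all_iff.2 hC₁] with t₂ h₂ hC₂
  have h := le_of_tendsto_of_tendsto' (h₁.sub h₂).enorm hC hC₂
  rwa [nonpos_iff_eq_zero, enorm_eq_zero, sub_eq_zero] at h

lemma exists_contDiff_hasCompactSupport_eventually_deriv_eq_one {s : Set ℝ} {x : ℝ}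
    (hs : s ∈ 𝓝 x) :
    ∃ χ : ℝ → ℝ, ContDiff ℝ (⊤ : ℕ∞) χ ∧ HasCompactSupport χ ∧ tsupport χ ⊆ s ∧
      ∀ᶠ t in 𝓝 x, deriv χ t = 1 := by
  obtain ⟨r, hr, hrs⟩ := nhds_basis_closedBall.mem_iff.1 hs
  let B : ContDiffBump x := ⟨r / 2, r, by positivity, half_lt_self hr⟩
  have hχ : ∀ᶠ t in 𝓝 x, (fun t => (t - x) * B t) t = t - x := by
    filter_upwards [closedBall_mem_nhds x (half_pos hr)] with t ht
    rw [B.one_of_mem_closedBall ht, mul_one]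
  refine ⟨fun t => (t - x) * B t, (contDiff_id.sub contDiff_const).mul B.contDiff,
    B.hasCompactSupport.mul_left, (tsupport_mul_subset_right).trans ?_, ?_⟩
  · rwa [B.tsupport_eq]
  · filter_upwards [hχ.eventually_nhds] with t ht
    rw [EventuallyEq.deriv_eq (f := fun t => t - x) ht,
      deriv_sub_const, deriv_id'']

section Fubini

variable {X : Type*} [MeasurableSpace X] {μ : Measure X} [SFinite μ] {s : Set ℝ} {Ω : Set X}

lemma setIntegral_prod_fst_mul {h : ℝ → ℝ} {f : ℝ × X → ℝ}
    (hf : IntegrableOn (fun q => h q.1 * f q) (s ×ˢ Ω) (volume.prod μ)) :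
    ∫ q in s ×ˢ Ω, h q.1 * f q ∂(volume.prod μ) = ∫ t in s, h t * ∫ x in Ω, f (t, x) ∂μ := by
  rw [IntegrableOn, ← Measure.prod_restrict] at hf
  rw [← Measure.prod_restrict, integral_prod _ hf]
  simp_rw [integral_const_mul]

lemma locallyIntegrableOn_setIntegral_of_integrableOn_deriv_mul {f : ℝ × X → ℝ} (hs : IsOpen s)
    (hΩ : MeasurableSet Ω)
    (hf : ∀ χ : ℝ → ℝ, ContDiff ℝ (⊤ : ℕ∞) χ → HasCompactSupport χ → tsupport χ ⊆ s →
      IntegrableOn (fun q => deriv χ q.1 * f q) (s ×ˢ Ω) (volume.prod μ)) :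
    LocallyIntegrableOn (fun t => ∫ x in Ω, f (t, x) ∂μ) s := by
  intro t ht
  obtain ⟨χ, hχ, hχc, hχs, hχ1⟩ :=
    exists_contDiff_hasCompactSupport_eventually_deriv_eq_one (hs.mem_nhds ht)
  obtain ⟨U, hU1, hUo, htU⟩ := _root_.eventually_nhds_iff.1 hχ1
  refine ⟨s ∩ U, inter_mem_nhdsWithin s (hUo.mem_nhds htU), ?_⟩
  have hint : IntegrableOn (fun q => f q) ((s ∩ U) ×ˢ Ω) (volume.prod μ) :=
    ((hf χ hχ hχc hχs).mono_set (prod_mono inter_subset_left subset_rfl)).congr_fun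
      (fun q hq => by simp [hU1 q.1 hq.1.2]) ((hs.inter hUo).measurableSet.prod hΩ)
  rw [IntegrableOn, ← Measure.prod_restrict] at hint
  exact hint.integral_prod_left

lemma hasDistribVariationLE_of_balance {e G : ℝ × X → ℝ}
    (hbal : ∀ χ : ℝ → ℝ, ContDiff ℝ (⊤ : ℕ∞) χ → HasCompactSupport χ → tsupport χ ⊆ s →
      IntegrableOn (fun q => deriv χ q.1 * e q) (s ×ˢ Ω) (volume.prod μ) ∧
      (∫ q in s ×ˢ Ω, deriv χ q.1 * e q ∂(volume.prod μ)) +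
        ∫ q in s ×ˢ Ω, χ q.1 * G q ∂(volume.prod μ) = 0) :
    HasDistribVariationLE (fun t => ∫ x in Ω, e (t, x) ∂μ) s
      (∫⁻ q in s ×ˢ Ω, ‖G q‖ₑ ∂(volume.prod μ)) := by
  intro χ hχ hχc hχs hχ1
  obtain ⟨hint, hsum⟩ := hbal χ hχ hχc hχs
  have hχ' : ∀ t ∉ s, deriv χ t * ∫ x in Ω, e (t, x) ∂μ = 0 := fun t ht => by
    rw [notMem_support.1 fun h => ht (hχs (support_deriv_subset h)), zero_mul]
  calc ‖∫ t, deriv χ t * ∫ x in Ω, e (t, x) ∂μ‖ₑ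
      = ‖∫ q in s ×ˢ Ω, χ q.1 * G q ∂(volume.prod μ)‖ₑ := by
        rw [← setIntegral_eq_integral_of_forall_compl_eq_zero hχ',
          ← setIntegral_prod_fst_mul hint, eq_neg_of_add_eq_zero_left hsum, enorm_neg]
    _ ≤ ∫⁻ q in s ×ˢ Ω, ‖χ q.1 * G q‖ₑ ∂(volume.prod μ) := enorm_integral_le_lintegral_enorm _
    _ ≤ ∫⁻ q in s ×ˢ Ω, ‖G q‖ₑ ∂(volume.prod μ) := by
        refine lintegral_mono fun q => ?_
        rw [enorm_mul]
        refine mul_le_of_le_one_left' ?_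
        simpa [Real.enorm_eq_ofReal_abs] using hχ1 q.1

end Fubini

def cutoffProfile (s : ℝ) : ℝ := Real.smoothTransition (4 * s - 1)

namespace cutoffProfile

lemma contDiff : ContDiff ℝ (⊤ : ℕ∞) cutoffProfile :=
  Real.smoothTransition.contDiff.comp (by fun_prop)

lemma continuous : Continuous cutoffProfile := contDiff.continuous

lemma nonneg (s : ℝ) : 0 ≤ cutoffProfile s := Real.smoothTransition.nonneg _

lemma le_one (s : ℝ) : cutoffProfile s ≤ 1 := Real.smoothTransition.le_one _

lemma eq_zero {s : ℝ} (h : s ≤ 1 / 4) : cutoffProfile s = 0 :=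
  Real.smoothTransition.zero_of_nonpos (by linarith)

lemma eq_one {s : ℝ} (h : 1 / 2 ≤ s) : cutoffProfile s = 1 :=
  Real.smoothTransition.one_of_one_le (by linarith)

lemma deriv_eq_zero {s : ℝ} (h : s ∉ Ioo (1 / 4) (1 / 2)) : deriv cutoffProfile s = 0 := by
  rcases le_or_gt s (1 / 4) with hs | hs
  · exact IsLocalMin.deriv_eq_zero <| .of_forall fun t => eq_zero hs ▸ nonneg t
  · exact IsLocalMax.deriv_eq_zero <| .of_forall fun t =>
      eq_one (not_lt.1 fun h' => h ⟨hs, h'⟩) ▸ le_one t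

lemma exists_abs_deriv_le : ∃ M, ∀ s, |deriv cutoffProfile s| ≤ M :=
  (contDiff.continuous_deriv (by simp)).bounded_above_of_compact_support <|
    .intro isCompact_Icc fun s hs => deriv_eq_zero fun h => hs (Ioo_subset_Icc_self h)

end cutoffProfile

section BoundaryCutoff

variable {E : Type*} [NormedAddCommGroup E] {Ω : Set E} {η η₀ : ℝ}

def boundaryCutoff (Ω : Set E) (η : ℝ) (x : E) : ℝ := cutoffProfile (infDist x Ωᶜ / η)

def boundaryStrip (Ω : Set E) (η : ℝ) : Set E :=
  {x ∈ Ω | η / 4 < infDist x Ωᶜ ∧ infDist x Ωᶜ < η / 2}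

lemma mem_of_infDist_compl_pos {x : E} (h : 0 < infDist x Ωᶜ) : x ∈ Ω :=
  not_not.1 fun hx => h.ne' (infDist_zero_of_mem hx)

lemma boundaryCutoff_eq_zero (hη : 0 < η) {x : E} (h : infDist x Ωᶜ ≤ η / 4) :
    boundaryCutoff Ω η x = 0 :=
  cutoffProfile.eq_zero (by rw [div_le_iff₀ hη]; linarith)

lemma boundaryCutoff_eq_one (hη : 0 < η) {x : E} (h : η / 2 ≤ infDist x Ωᶜ) :
    boundaryCutoff Ω η x = 1 :=
  cutoffProfile.eq_one (by rw [le_div_iff₀ hη]; linarith)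

lemma boundaryCutoff_nonneg (x : E) : 0 ≤ boundaryCutoff Ω η x := cutoffProfile.nonneg _

lemma boundaryCutoff_le_one (x : E) : boundaryCutoff Ω η x ≤ 1 := cutoffProfile.le_one _

lemma continuous_boundaryCutoff : Continuous (boundaryCutoff Ω η) :=
  cutoffProfile.continuous.comp ((continuous_infDist_pt _).div_const _)

lemma tsupport_boundaryCutoff_subset (hη : 0 < η) : tsupport (boundaryCutoff Ω η) ⊆ Ω := by
  have hK : tsupport (boundaryCutoff Ω η) ⊆ {x | η / 4 ≤ infDist x Ωᶜ} :=
    closure_minimal (fun x hx => not_lt.1 fun h => hx (boundaryCutoff_eq_zero hη h.le))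
      (isClosed_le continuous_const (continuous_infDist_pt _))
  intro x hx
  have h : η / 4 ≤ infDist x Ωᶜ := hK hx
  exact mem_of_infDist_compl_pos (by linarith)

lemma hasCompactSupport_boundaryCutoff [ProperSpace E] (hΩ : Bornology.IsBounded Ω)
    (hη : 0 < η) : HasCompactSupport (boundaryCutoff Ω η) :=
  isCompact_of_isClosed_isBounded (isClosed_tsupport _)
    (hΩ.subset (tsupport_boundaryCutoff_subset hη))

lemma tendsto_boundaryCutoff {x : E} (hx : 0 < infDist x Ωᶜ) :
    Tendsto (fun η => boundaryCutoff Ω η x) (𝓝[>] 0) (𝓝 1) := by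
  refine tendsto_const_nhds.congr' ?_
  filter_upwards [Ioo_mem_nhdsGT (by positivity : (0 : ℝ) < 2 * infDist x Ωᶜ)] with η hη
  exact (boundaryCutoff_eq_one hη.1 (by linarith [hη.2])).symm

lemma measurableSet_boundaryStrip [MeasurableSpace E] [OpensMeasurableSpace E]
    (hΩ : MeasurableSet Ω) : MeasurableSet (boundaryStrip Ω η) :=
  hΩ.inter ((measurableSet_lt measurable_const (continuous_infDist_pt _).measurable).inter
    (measurableSet_lt (continuous_infDist_pt _).measurable measurable_const))

variable [NormedSpace ℝ E] (hΩ : IsOpen Ω)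
    (hd : ContDiffOn ℝ 1 (fun x => infDist x Ωᶜ) {x ∈ Ω | infDist x Ωᶜ < η₀})
    (hη : 0 < η) (hηη₀ : η ≤ η₀)
include hΩ hd hη hηη₀

lemma contDiffAt_infDist_compl {x : E} (hx : η / 4 ≤ infDist x Ωᶜ)
    (hx' : infDist x Ωᶜ ≤ η / 2) :
    ContDiffAt ℝ 1 (fun x => infDist x Ωᶜ) x :=
  hd.contDiffAt <| (hΩ.inter (isOpen_lt (continuous_infDist_pt _) continuous_const)).mem_nhds
    ⟨mem_of_infDist_compl_pos (by linarith), show infDist x Ωᶜ < η₀ by linarith⟩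

lemma contDiff_boundaryCutoff : ContDiff ℝ 1 (boundaryCutoff Ω η) := by
  have hcont := continuous_infDist_pt (s := Ωᶜ)
  refine contDiff_iff_contDiffAt.2 fun x => ?_
  rcases lt_or_ge (infDist x Ωᶜ) (η / 4) with h | h
  · refine (contDiffAt_const (c := (0 : ℝ))).congr_of_eventuallyEq ?_
    filter_upwards [hcont.continuousAt.eventually_lt continuousAt_const h] with y hy
    exact boundaryCutoff_eq_zero hη hy.le
  rcases lt_or_ge (η / 2) (infDist x Ωᶜ) with h' | h'
  · refine (contDiffAt_const (c := (1 : ℝ))).congr_of_eventuallyEq ?_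
    filter_upwards [continuousAt_const.eventually_lt hcont.continuousAt h'] with y hy
    exact boundaryCutoff_eq_one hη hy.le
  exact (cutoffProfile.contDiff.of_le (by exact_mod_cast le_top)).contDiffAt.comp x
    ((contDiffAt_infDist_compl hΩ hd hη hηη₀ h h').div_const η)

lemma fderiv_boundaryCutoff_apply (x v : E) :
    fderiv ℝ (boundaryCutoff Ω η) x v = (boundaryStrip Ω η).indicator (fun x =>
      deriv cutoffProfile (infDist x Ωᶜ / η) / η * fderiv ℝ (fun y => infDist y Ωᶜ) x v) x := by
  by_cases hx : x ∈ boundaryStrip Ω η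
  · rw [indicator_of_mem hx]
    have hdx := (contDiffAt_infDist_compl hΩ hd hη hηη₀ hx.2.1.le hx.2.2.le).differentiableAt
      one_ne_zero
    have hq : HasFDerivAt (fun y => infDist y Ωᶜ / η)
        (η⁻¹ • fderiv ℝ (fun y => infDist y Ωᶜ) x) x := by
      simpa only [div_eq_mul_inv] using hdx.hasFDerivAt.mul_const η⁻¹
    have h := ((cutoffProfile.contDiff.differentiable (by simp)).differentiableAt.hasDerivAt
      |>.comp_hasFDerivAt x hq).fderiv
    rw [show boundaryCutoff Ω η = cutoffProfile ∘ fun y => infDist y Ωᶜ / η from rfl, h]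
    simp only [smul_apply, smul_eq_mul]
    ring
  · rw [indicator_of_notMem hx]
    suffices fderiv ℝ (boundaryCutoff Ω η) x = 0 by simp [this]
    rcases le_or_gt (infDist x Ωᶜ) (η / 4) with h | h
    · exact IsLocalMin.fderiv_eq_zero <| .of_forall fun y =>
        boundaryCutoff_eq_zero hη h ▸ boundaryCutoff_nonneg y
    · have h' : η / 2 ≤ infDist x Ωᶜ := not_lt.1 fun h' =>
        hx ⟨mem_of_infDist_compl_pos (by linarith), h, h'⟩
      exact IsLocalMax.fderiv_eq_zero <| .of_forall fun y =>
        boundaryCutoff_eq_one hη h' ▸ boundaryCutoff_le_one y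

end BoundaryCutoff

lemma tendsto_setIntegral_mul_boundaryCutoff {E : Type*} [NormedAddCommGroup E]
    [MeasurableSpace E] [OpensMeasurableSpace E] {μ : Measure E} {Ω : Set E} (hΩ : IsOpen Ω)
    (hΩc : Ωᶜ.Nonempty) {f : E → ℝ} (hf : IntegrableOn f Ω μ) :
    Tendsto (fun η => ∫ x in Ω, f x * boundaryCutoff Ω η x ∂μ) (𝓝[>] 0)
      (𝓝 (∫ x in Ω, f x ∂μ)) := by
  refine tendsto_integral_filter_of_dominated_convergence (fun x => ‖f x‖)
    (.of_forall fun η => hf.aestronglyMeasurable.mul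
      continuous_boundaryCutoff.aestronglyMeasurable)
    (.of_forall fun η => .of_forall fun x => ?_) hf.norm ?_
  · rw [norm_mul]
    exact mul_le_of_le_one_right (norm_nonneg _) <| by
      simpa [abs_of_nonneg (boundaryCutoff_nonneg x)] using boundaryCutoff_le_one x
  · filter_upwards [self_mem_ae_restrict hΩ.measurableSet] with x hx
    have hpos := (hΩ.isClosed_compl.notMem_iff_infDist_pos hΩc).1 (not_not.2 hx)
    simpa using (tendsto_boundaryCutoff hpos).const_mul (f x)

lemma sum_mul_pd {n : ℕ} (f : Eu n → ℝ) (x v : Eu n) :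
    ∑ i, v i * pd i f x = fderiv ℝ f x v := by
  conv_rhs => rw [← (EuclideanSpace.basisFun (Fin n) ℝ).sum_repr v]
  simp [pd, map_sum]

lemma sum_mul_gradient {n : ℕ} (f : Eu n → ℝ) (x v : Eu n) :
    ∑ i, v i * gradient f x i = fderiv ℝ f x v := by
  rw [gradient, ← InnerProductSpace.toDual_symm_apply, PiLp.inner_apply]
  simp

def boundaryFlux {n : ℕ} (Ω : Set (Eu n)) (I : Set ℝ) (F : ℝ × Eu n → ℝ)
    (V : ℝ × Eu n → Eu n) (η : ℝ) : ℝ≥0∞ :=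
  ENNReal.ofReal (1 / η) * ∫⁻ q in I ×ˢ boundaryStrip Ω η,
    ENNReal.ofReal |F q * ∑ i, V q i * gradient (fun y => infDist y Ωᶜ) q.2 i|

lemma lintegral_enorm_mul_sum_pd_boundaryCutoff_le {n : ℕ} {Ω : Set (Eu n)} (hΩ : IsOpen Ω)
    {η₀ η M : ℝ} (hd : ContDiffOn ℝ 1 (fun x => infDist x Ωᶜ) {x ∈ Ω | infDist x Ωᶜ < η₀})
    (hη : 0 < η) (hηη₀ : η ≤ η₀) (hM : ∀ s, |deriv cutoffProfile s| ≤ M)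
    {I : Set ℝ} (hI : MeasurableSet I) (F : ℝ × Eu n → ℝ) (V : ℝ × Eu n → Eu n) :
    ∫⁻ q in I ×ˢ Ω, ‖F q * ∑ i, V q i * pd i (boundaryCutoff Ω η) q.2‖ₑ ≤
      ENNReal.ofReal M * boundaryFlux Ω I F V η := by
  have hM0 : 0 ≤ M := (abs_nonneg _).trans (hM 0)
  have hstrip : MeasurableSet (I ×ˢ boundaryStrip Ω η) :=
    hI.prod (measurableSet_boundaryStrip hΩ.measurableSet)
  have hsub : I ×ˢ boundaryStrip Ω η ⊆ I ×ˢ Ω := prod_mono subset_rfl (sep_subset _ _)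
  have hpt : ∀ q ∈ I ×ˢ Ω, ‖F q * ∑ i, V q i * pd i (boundaryCutoff Ω η) q.2‖ₑ ≤
      (I ×ˢ boundaryStrip Ω η).indicator (fun q => ENNReal.ofReal (M * (1 / η)) *
        ENNReal.ofReal |F q * ∑ i, V q i * gradient (fun y => infDist y Ωᶜ) q.2 i|) q := by
    intro q hq
    rw [sum_mul_pd, fderiv_boundaryCutoff_apply hΩ hd hη hηη₀]
    simp only [sum_mul_gradient]
    by_cases hq' : q.2 ∈ boundaryStrip Ω η
    · rw [indicator_of_mem hq', indicator_of_mem (show q ∈ I ×ˢ boundaryStrip Ω η from ⟨hq.1, hq'⟩),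
        ← ENNReal.ofReal_mul (by positivity), Real.enorm_eq_ofReal_abs]
      refine ENNReal.ofReal_le_ofReal ?_
      rw [abs_mul, abs_mul, abs_mul, abs_div, abs_of_pos hη, one_div]
      have := hM (infDist q.2 Ωᶜ / η)
      calc |F q| * (|deriv cutoffProfile (infDist q.2 Ωᶜ / η)| / η *
            |fderiv ℝ (fun y => infDist y Ωᶜ) q.2 (V q)|)
          ≤ |F q| * (M / η * |fderiv ℝ (fun y => infDist y Ωᶜ) q.2 (V q)|) := by gcongr
        _ = M * η⁻¹ * (|F q| * |fderiv ℝ (fun y => infDist y Ωᶜ) q.2 (V q)|) := by ring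
    · simp [indicator_of_notMem hq', indicator_of_notMem fun h : q ∈ I ×ˢ _ => hq' h.2]
  calc ∫⁻ q in I ×ˢ Ω, ‖F q * ∑ i, V q i * pd i (boundaryCutoff Ω η) q.2‖ₑ
      ≤ ∫⁻ q in I ×ˢ Ω, (I ×ˢ boundaryStrip Ω η).indicator (fun q =>
        ENNReal.ofReal (M * (1 / η)) *
          ENNReal.ofReal |F q * ∑ i, V q i * gradient (fun y => infDist y Ωᶜ) q.2 i|) q :=
        setLIntegral_mono' (hI.prod hΩ.measurableSet) hpt
    _ = ENNReal.ofReal M * boundaryFlux Ω I F V η := by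
        rw [lintegral_indicator hstrip, Measure.restrict_restrict hstrip,
          inter_eq_self_of_subset_left hsub, lintegral_const_mul' _ _ ENNReal.ofReal_ne_top,
          ENNReal.ofReal_mul hM0, mul_assoc]
        rfl

/-- `∂ₜ e + div (F V) = 0` in the sense of distributions on `I × Ω`, tested against products
`χ(t) ψ(x)`. -/
def IsWeakConservationLaw {n : ℕ} (Ω : Set (Eu n)) (I : Set ℝ) (e F : ℝ × Eu n → ℝ)
    (V : ℝ × Eu n → Eu n) : Prop :=
  ∀ χ : ℝ → ℝ, ContDiff ℝ (⊤ : ℕ∞) χ → HasCompactSupport χ → tsupport χ ⊆ I →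
  ∀ ψ : Eu n → ℝ, ContDiff ℝ 1 ψ → HasCompactSupport ψ → tsupport ψ ⊆ Ω →
    IntegrableOn (fun q => deriv χ q.1 * (e q * ψ q.2)) (I ×ˢ Ω) ∧
    (∫ q in I ×ˢ Ω, deriv χ q.1 * (e q * ψ q.2)) +
      ∫ q in I ×ˢ Ω, χ q.1 * (F q * ∑ i, V q i * pd i ψ q.2) = 0

lemma IsWeakConservationLaw.ae_enorm_sub_le_boundaryFlux {n : ℕ} {Ω : Set (Eu n)} {a b : ℝ}
    {e F : ℝ × Eu n → ℝ} {V : ℝ × Eu n → Eu n} (h : IsWeakConservationLaw Ω (Ioo a b) e F V)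
    (hΩo : IsOpen Ω) (hΩb : Bornology.IsBounded Ω) {η₀ η M : ℝ}
    (hd : ContDiffOn ℝ 1 (fun x => infDist x Ωᶜ) {x ∈ Ω | infDist x Ωᶜ < η₀})
    (hη : 0 < η) (hηη₀ : η ≤ η₀) (hM : ∀ s, |deriv cutoffProfile s| ≤ M) :
    ∀ᵐ t₁ ∂volume.restrict (Ioo a b), ∀ᵐ t₂ ∂volume.restrict (Ioo a b),
      ‖(∫ x in Ω, e (t₁, x) * boundaryCutoff Ω η x) -
        ∫ x in Ω, e (t₂, x) * boundaryCutoff Ω η x‖ₑ ≤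
        ENNReal.ofReal M * boundaryFlux Ω (Ioo a b) F V η := by
  have hψ := fun χ hχ hχc hχs => h χ hχ hχc hχs (boundaryCutoff Ω η)
    (contDiff_boundaryCutoff hΩo hd hη hηη₀) (hasCompactSupport_boundaryCutoff hΩb hη)
    (tsupport_boundaryCutoff_subset hη)
  refine HasDistribVariationLE.ae_restrict_enorm_sub_le
    (locallyIntegrableOn_setIntegral_of_integrableOn_deriv_mul isOpen_Ioo hΩo.measurableSet
      fun χ hχ hχc hχs => (hψ χ hχ hχc hχs).1)
    ((hasDistribVariationLE_of_balance hψ).mono subset_rfl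
      (lintegral_enorm_mul_sum_pd_boundaryCutoff_le hΩo hd hη hηη₀ hM measurableSet_Ioo F V))

theorem local_to_global_energy_general
    {n : ℕ} {Ω : Set (Eu n)} (hΩo : IsOpen Ω) (hΩb : Bornology.IsBounded Ω)
    {T : ℝ}
    (u : ℝ → Eu n → Eu n) (p : ℝ → Eu n → ℝ)
    (huL2 : ∀ᵐ t ∂volume.restrict (Ioo 0 T), MemLp (u t) 2 (volume.restrict Ω))
    -- the local energy balance, with integrable integrands
    (hbalance : ∀ χ : ℝ → ℝ, ContDiff ℝ (⊤ : ℕ∞) χ → HasCompactSupport χ →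
      tsupport χ ⊆ Ioo 0 T →
      ∀ ψ : Eu n → ℝ, ContDiff ℝ 1 ψ → HasCompactSupport ψ → tsupport ψ ⊆ Ω →
      IntegrableOn (fun q : ℝ × Eu n =>
        deriv χ q.1 * (‖u q.1 q.2‖ ^ 2 / 2 * ψ q.2)) (Ioo 0 T ×ˢ Ω) ∧
      IntegrableOn (fun q : ℝ × Eu n =>
        χ q.1 * ((‖u q.1 q.2‖ ^ 2 / 2 + p q.1 q.2) *
          ∑ i, u q.1 q.2 i * pd i ψ q.2)) (Ioo 0 T ×ˢ Ω) ∧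
      (∫ q in Ioo 0 T ×ˢ Ω, deriv χ q.1 * (‖u q.1 q.2‖ ^ 2 / 2 * ψ q.2)) +
        (∫ q in Ioo 0 T ×ˢ Ω, χ q.1 * ((‖u q.1 q.2‖ ^ 2 / 2 + p q.1 q.2) *
          ∑ i, u q.1 q.2 i * pd i ψ q.2)) = 0)
    -- the distance function is `C¹` with `|∇d| = 1` near the boundary
    {η₀ : ℝ} (hη₀ : 0 < η₀)
    (hd : ContDiffOn ℝ 1 (fun x : Eu n => infDist x Ωᶜ) {x ∈ Ω | infDist x Ωᶜ < η₀})
    -- the flux condition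
    (hflux : Tendsto (fun η : ℝ =>
        ENNReal.ofReal (1/η) *
          ∫⁻ q in Ioo 0 T ×ˢ {x ∈ Ω | η/4 < infDist x Ωᶜ ∧ infDist x Ωᶜ < η/2},
            ENNReal.ofReal
              |(‖u q.1 q.2‖ ^ 2 / 2 + p q.1 q.2) *
                ∑ i, u q.1 q.2 i * gradient (fun y : Eu n => infDist y Ωᶜ) q.2 i|)
      (𝓝[>] 0) (𝓝 0)) :
    ∀ᵐ t₁ ∂volume.restrict (Ioo 0 T), ∀ᵐ t₂ ∂volume.restrict (Ioo 0 T),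
      ∫ x in Ω, ‖u t₂ x‖ ^ 2 = ∫ x in Ω, ‖u t₁ x‖ ^ 2 := by
  rcases subsingleton_or_nontrivial (Eu n) with hn | hn
  · exact .of_forall fun t₁ => .of_forall fun t₂ => by simp [Subsingleton.elim (u _ _) 0]
  have hΩc : Ωᶜ.Nonempty :=
    nonempty_compl.2 fun h => NormedSpace.unbounded_univ ℝ (Eu n) (h ▸ hΩb)
  have hbal : IsWeakConservationLaw Ω (Ioo 0 T) (fun q => ‖u q.1 q.2‖ ^ 2 / 2)
      (fun q => ‖u q.1 q.2‖ ^ 2 / 2 + p q.1 q.2) (fun q => u q.1 q.2) :=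
    fun χ hχ hχc hχs ψ hψ hψc hψs => (hbalance χ hχ hχc hχs ψ hψ hψc hψs).imp_right And.right
  obtain ⟨M, hM⟩ := cutoffProfile.exists_abs_deriv_le
  obtain ⟨η, -, hη, hη0⟩ := exists_seq_strictAnti_tendsto' hη₀
  replace hη0 : Tendsto η atTop (𝓝[>] 0) :=
    tendsto_nhdsWithin_iff.2 ⟨hη0, .of_forall fun k => (hη k).1⟩
  have hlim : ∀ᵐ t ∂volume.restrict (Ioo 0 T), Tendsto
      (fun k => ∫ x in Ω, ‖u t x‖ ^ 2 / 2 * boundaryCutoff Ω (η k) x) atTop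
      (𝓝 (∫ x in Ω, ‖u t x‖ ^ 2 / 2)) := by
    filter_upwards [huL2] with t ht
    exact (tendsto_setIntegral_mul_boundaryCutoff hΩo hΩc
      ((ht.integrable_norm_pow two_ne_zero).div_const 2)).comp hη0
  have hbound : Tendsto (fun k => ENNReal.ofReal M * boundaryFlux Ω (Ioo 0 T)
      (fun q => ‖u q.1 q.2‖ ^ 2 / 2 + p q.1 q.2) (fun q => u q.1 q.2) (η k)) atTop (𝓝 0) := by
    rw [← mul_zero (ENNReal.ofReal M)]
    exact ENNReal.Tendsto.const_mul (hflux.comp hη0) (.inr ENNReal.ofReal_ne_top)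
  filter_upwards [ae_ae_eq_of_tendsto_of_enorm_sub_le hlim hbound fun k =>
    hbal.ae_enorm_sub_le_boundaryFlux hΩo hΩb hd (hη k).1 (hη k).2.le hM] with t₁ h
  filter_upwards [h] with t₂ h
  rw [integral_div, integral_div] at h
  linarith

/-- the passage from local to global energy conservation in the proof of
Theorem 4.1: the local energy balance against test functions `χ(t)ψ(x)`, together with
the vanishing of the normal energy flux near the boundary, implies that the `L²` norm of
`u(t,·)` is independent of `t` for a.e. `t`. -/
theorem local_to_global_energy
    {n : ℕ} {Ω : Set (Eu n)} (hΩo : IsOpen Ω) (hΩb : Bornology.IsBounded Ω)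
    {T : ℝ} (hT : 0 < T)
    (u : ℝ → Eu n → Eu n) (p : ℝ → Eu n → ℝ)
    (huli : LocallyIntegrableOn (fun q : ℝ × Eu n => u q.1 q.2) (Ioo 0 T ×ˢ Ω))
    (hpli : LocallyIntegrableOn (fun q : ℝ × Eu n => p q.1 q.2) (Ioo 0 T ×ˢ Ω))
    (huL2 : ∀ᵐ t ∂volume.restrict (Ioo 0 T), MemLp (u t) 2 (volume.restrict Ω))
    (hLq : ∃ q : ℝ≥0∞, 1 ≤ q ∧
      MemLp (fun t => (eLpNorm (u t) 2 (volume.restrict Ω)).toReal) q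
        (volume.restrict (Ioo 0 T)))
    -- the local energy balance, with integrable integrands
    (hbalance : ∀ χ : ℝ → ℝ, ContDiff ℝ (⊤ : ℕ∞) χ → HasCompactSupport χ →
      tsupport χ ⊆ Ioo 0 T →
      ∀ ψ : Eu n → ℝ, ContDiff ℝ 1 ψ → HasCompactSupport ψ → tsupport ψ ⊆ Ω →
      IntegrableOn (fun q : ℝ × Eu n =>
        deriv χ q.1 * (‖u q.1 q.2‖ ^ 2 / 2 * ψ q.2)) (Ioo 0 T ×ˢ Ω) ∧
      IntegrableOn (fun q : ℝ × Eu n =>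
        χ q.1 * ((‖u q.1 q.2‖ ^ 2 / 2 + p q.1 q.2) *
          ∑ i, u q.1 q.2 i * pd i ψ q.2)) (Ioo 0 T ×ˢ Ω) ∧
      (∫ q in Ioo 0 T ×ˢ Ω, deriv χ q.1 * (‖u q.1 q.2‖ ^ 2 / 2 * ψ q.2)) +
        (∫ q in Ioo 0 T ×ˢ Ω, χ q.1 * ((‖u q.1 q.2‖ ^ 2 / 2 + p q.1 q.2) *
          ∑ i, u q.1 q.2 i * pd i ψ q.2)) = 0)
    -- the distance function is `C¹` with `|∇d| = 1` near the boundary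
    {η₀ : ℝ} (hη₀ : 0 < η₀)
    (hd : ContDiffOn ℝ 1 (fun x : Eu n => infDist x Ωᶜ) {x ∈ Ω | infDist x Ωᶜ < η₀})
    (hd1 : ∀ x ∈ {x ∈ Ω | infDist x Ωᶜ < η₀},
      ‖gradient (fun y : Eu n => infDist y Ωᶜ) x‖ = 1)
    -- the flux condition
    (hflux : Tendsto (fun η : ℝ =>
        ENNReal.ofReal (1/η) *
          ∫⁻ q in Ioo 0 T ×ˢ {x ∈ Ω | η/4 < infDist x Ωᶜ ∧ infDist x Ωᶜ < η/2},
            ENNReal.ofReal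
              |(‖u q.1 q.2‖ ^ 2 / 2 + p q.1 q.2) *
                ∑ i, u q.1 q.2 i * gradient (fun y : Eu n => infDist y Ωᶜ) q.2 i|)
      (𝓝[>] 0) (𝓝 0)) :
    ∀ᵐ t₁ ∂volume.restrict (Ioo 0 T), ∀ᵐ t₂ ∂volume.restrict (Ioo 0 T),
      ∫ x in Ω, ‖u t₂ x‖ ^ 2 = ∫ x in Ω, ‖u t₁ x‖ ^ 2 :=
  local_to_global_energy_general hΩo hΩb u p huL2 hbalance hη₀ hd hflux
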